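/- arXiv:2305.02168 — 2 statements merged into one kernel-verified Lean document; each statement's English description precedes it below -/
import Mathlib

section
/- Let a, b be real numbers with b > 0 and a ≥ b + 1. Then the function g : ℝⁿ × (0,∞) → ℝ defined by g(x,t) = ‖x‖^a / t^b is convex on ℝⁿ × (0,∞), where ‖·‖ is the Euclidean norm. -/
open Real Finset

/-- Radon's inequality: joint convexity of `(p,s) ↦ p^(b+1)/s^b` (two-point form). -/
lemma radon_aux (b : ℝ) (hb : 0 < b) {p q s t w₁ w₂ : ℝ} (hp : 0 ≤ p) (hq : 0 ≤ q)
    (hs : 0 < s) (ht : 0 < t) (hw₁ : 0 ≤ w₁) (hw₂ : 0 ≤ w₂) (hw : w₁ + w₂ = 1) :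
    (w₁ * p + w₂ * q) ^ (b + 1) / (w₁ * s + w₂ * t) ^ b
      ≤ w₁ * (p ^ (b + 1) / s ^ b) + w₂ * (q ^ (b + 1) / t ^ b) := by
  have hb1 : (0:ℝ) < b + 1 := by linarith
  set B := w₁ * s + w₂ * t with hBdef
  have hB : 0 < B := by
    have h1 := min_le_left s t
    have h2 := min_le_right s t
    have h3 : 0 < min s t := lt_min hs ht
    nlinarith
  set A := w₁ * (p ^ (b + 1) / s ^ b) + w₂ * (q ^ (b + 1) / t ^ b) with hAdef
  have hA : 0 ≤ A := by positivity
  rw [div_le_iff₀ (rpow_pos_of_pos hB b)]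
  -- Hölder with weights w₁ s, w₂ t and values p/s, q/t
  have key : w₁ * p + w₂ * q ≤ B ^ (1 - (b+1)⁻¹) * A ^ (b+1)⁻¹ := by
    have H := inner_le_weight_mul_Lp_of_nonneg (Finset.univ : Finset (Fin 2))
      (p := b + 1) (by linarith) ![w₁ * s, w₂ * t] ![p / s, q / t]
      (by intro i; fin_cases i <;> simp <;> positivity)
      (by intro i; fin_cases i <;> simp <;> positivity)
    simp only [Fin.sum_univ_two, Matrix.cons_val_zero, Matrix.cons_val_one, Matrix.head_cons] at H
    have e1 : w₁ * s * (p / s) + w₂ * t * (q / t) = w₁ * p + w₂ * q := by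
      field_simp
    have e2 : w₁ * s * (p / s) ^ (b + 1) + w₂ * t * (q / t) ^ (b + 1) = A := by
      rw [Real.div_rpow hp hs.le, Real.div_rpow hq ht.le, hAdef]
      rw [Real.rpow_add_one hs.ne' b, Real.rpow_add_one ht.ne' b]
      have hsb : (0:ℝ) < s ^ b := rpow_pos_of_pos hs b
      have htb : (0:ℝ) < t ^ b := rpow_pos_of_pos ht b
      field_simp
    rw [e1, e2] at H
    exact H
  have hL : 0 ≤ w₁ * p + w₂ * q := by positivity
  calc (w₁ * p + w₂ * q) ^ (b + 1)
      ≤ (B ^ (1 - (b+1)⁻¹) * A ^ (b+1)⁻¹) ^ (b + 1) :=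
        Real.rpow_le_rpow hL key hb1.le
    _ = A * B ^ b := by
        rw [Real.mul_rpow (by positivity) (by positivity),
          ← Real.rpow_mul hB.le, ← Real.rpow_mul hA]
        have e3 : (1 - (b+1)⁻¹) * (b + 1) = b := by field_simp; ring
        have e4 : (b+1)⁻¹ * (b + 1) = 1 := by field_simp
        rw [e3, e4, Real.rpow_one, mul_comm]

/-- Scalar version: `(u,s) ↦ u^a / s^b` is jointly convex on `[0,∞) × (0,∞)`. -/
lemma scalar_aux (a b : ℝ) (hb : 0 < b) (hab : b + 1 ≤ a) {u v s t w₁ w₂ : ℝ}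
    (hu : 0 ≤ u) (hv : 0 ≤ v) (hs : 0 < s) (ht : 0 < t)
    (hw₁ : 0 ≤ w₁) (hw₂ : 0 ≤ w₂) (hw : w₁ + w₂ = 1) :
    (w₁ * u + w₂ * v) ^ a / (w₁ * s + w₂ * t) ^ b
      ≤ w₁ * (u ^ a / s ^ b) + w₂ * (v ^ a / t ^ b) := by
  have hb1 : (0:ℝ) < b + 1 := by linarith
  set c := a / (b + 1) with hcdef
  have hc : 1 ≤ c := by
    rw [hcdef, le_div_iff₀ hb1]; linarith
  have hca : c * (b + 1) = a := by
    rw [hcdef]; field_simp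
  have hB : 0 < w₁ * s + w₂ * t := by
    have h1 := min_le_left s t
    have h2 := min_le_right s t
    have h3 : 0 < min s t := lt_min hs ht
    nlinarith
  have hconv : (w₁ * u + w₂ * v) ^ c ≤ w₁ * u ^ c + w₂ * v ^ c := by
    have := (convexOn_rpow hc).2 (Set.mem_Ici.2 hu) (Set.mem_Ici.2 hv) hw₁ hw₂ hw
    exact this
  have h1 : (w₁ * u + w₂ * v) ^ a ≤ (w₁ * u ^ c + w₂ * v ^ c) ^ (b + 1) := by
    rw [← hca, Real.rpow_mul (by positivity)]
    exact Real.rpow_le_rpow (by positivity) hconv hb1.le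
  have h2 := radon_aux b hb (p := u ^ c) (q := v ^ c)
    (by positivity) (by positivity) hs ht hw₁ hw₂ hw
  rw [← Real.rpow_mul hu, ← Real.rpow_mul hv, hca] at h2
  calc (w₁ * u + w₂ * v) ^ a / (w₁ * s + w₂ * t) ^ b
      ≤ (w₁ * u ^ c + w₂ * v ^ c) ^ (b + 1) / (w₁ * s + w₂ * t) ^ b :=
        (div_le_div_iff_of_pos_right (rpow_pos_of_pos hB b)).2 h1
    _ ≤ w₁ * (u ^ a / s ^ b) + w₂ * (v ^ a / t ^ b) := h2

/-- For `b > 0` and `a ≥ b + 1`, the function `g(x,t) = ‖x‖^a / t^b` is convex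
on `ℝⁿ × (0,∞)`. -/
theorem norm_pow_div_pow_convex (n : ℕ) (a b : ℝ) (hb : 0 < b) (hab : b + 1 ≤ a) :
    ConvexOn ℝ {p : EuclideanSpace ℝ (Fin n) × ℝ | 0 < p.2}
      (fun p => ‖p.1‖ ^ a / p.2 ^ b) := by
  have ha : 0 < a := by linarith
  constructor
  · intro x hx y hy w₁ w₂ hw₁ hw₂ hw
    simp only [Set.mem_setOf_eq] at *
    show 0 < (w₁ • x + w₂ • y).2
    have h3 : 0 < min x.2 y.2 := lt_min hx hy
    have h1 := min_le_left x.2 y.2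
    have h2 := min_le_right x.2 y.2
    simp only [Prod.snd_add, Prod.smul_snd, smul_eq_mul]
    nlinarith
  · rintro ⟨x, sx⟩ hx ⟨y, sy⟩ hy w₁ w₂ hw₁ hw₂ hw
    simp only [Set.mem_setOf_eq] at hx hy
    simp only [Prod.smul_mk, Prod.mk_add_mk, smul_eq_mul]
    have hnorm : ‖w₁ • x + w₂ • y‖ ≤ w₁ * ‖x‖ + w₂ * ‖y‖ := by
      calc ‖w₁ • x + w₂ • y‖ ≤ ‖w₁ • x‖ + ‖w₂ • y‖ := norm_add_le _ _
        _ = w₁ * ‖x‖ + w₂ * ‖y‖ := by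
            rw [norm_smul, norm_smul, Real.norm_eq_abs, Real.norm_eq_abs,
              abs_of_nonneg hw₁, abs_of_nonneg hw₂]
    have hB : 0 < w₁ * sx + w₂ * sy := by
      have h3 : 0 < min sx sy := lt_min hx hy
      have h1 := min_le_left sx sy
      have h2 := min_le_right sx sy
      nlinarith
    calc ‖w₁ • x + w₂ • y‖ ^ a / (w₁ * sx + w₂ * sy) ^ b
        ≤ (w₁ * ‖x‖ + w₂ * ‖y‖) ^ a / (w₁ * sx + w₂ * sy) ^ b :=
          (div_le_div_iff_of_pos_right (rpow_pos_of_pos hB b)).2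
            (Real.rpow_le_rpow (norm_nonneg _) hnorm ha.le)
      _ ≤ w₁ * (‖x‖ ^ a / sx ^ b) + w₂ * (‖y‖ ^ a / sy ^ b) :=
          scalar_aux a b hb hab (norm_nonneg x) (norm_nonneg y) hx hy hw₁ hw₂ hw
end

section
/- Let r > 3 be a real number. Then the function g : ℝ^{3×3} × (0,∞) → ℝ defined by g(F,d) = ‖F‖^{3(r-1)} / d^{r-1} is convex, where ‖F‖ denotes the Frobenius norm. Consequently, the function F ↦ (‖F‖³ / det F)^{r-1}, defined on the set of 3×3 matrices with positive determinant, is polyconvex: it can be written as a convex function of (F, det F). -/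
open Set


/-- Frobenius norm of a real 3×3 matrix. -/
noncomputable def frob (F : Matrix (Fin 3) (Fin 3) ℝ) : ℝ :=
  Real.sqrt (∑ i, ∑ j, (F i j) ^ 2)

lemma frob_eq (F : Matrix (Fin 3) (Fin 3) ℝ) :
    frob F = ‖(WithLp.toLp 2 fun p : Fin 3 × Fin 3 => F p.1 p.2)‖ := by
  rw [frob, EuclideanSpace.norm_eq]
  congr 1
  rw [show (∑ i : Fin 3 × Fin 3, ‖(WithLp.toLp 2 fun p : Fin 3 × Fin 3 => F p.1 p.2) i‖ ^ 2)
      = ∑ i : Fin 3, ∑ j : Fin 3, ‖F i j‖ ^ 2 from Fintype.sum_prod_type _]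
  simp [Real.norm_eq_abs, sq_abs]

lemma frob_nonneg (F : Matrix (Fin 3) (Fin 3) ℝ) : 0 ≤ frob F := Real.sqrt_nonneg _

lemma frob_combo (F G : Matrix (Fin 3) (Fin 3) ℝ) {a b : ℝ} (ha : 0 ≤ a) (hb : 0 ≤ b) :
    frob (a • F + b • G) ≤ a * frob F + b * frob G := by
  rw [frob_eq, frob_eq, frob_eq]
  have : (WithLp.toLp 2 fun p : Fin 3 × Fin 3 => (a • F + b • G) p.1 p.2)
      = a • (WithLp.toLp 2 fun p : Fin 3 × Fin 3 => F p.1 p.2)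
        + b • (WithLp.toLp 2 fun p : Fin 3 × Fin 3 => G p.1 p.2) := by
    ext p
    simp [Matrix.add_apply, Matrix.smul_apply, smul_eq_mul]
  rw [this]
  calc ‖_ + _‖ ≤ ‖a • (WithLp.toLp 2 fun p : Fin 3 × Fin 3 => F p.1 p.2)‖
      + ‖b • (WithLp.toLp 2 fun p : Fin 3 × Fin 3 => G p.1 p.2)‖ := norm_add_le _ _
    _ = a * ‖_‖ + b * ‖_‖ := by
        rw [norm_smul, norm_smul, Real.norm_eq_abs, Real.norm_eq_abs,
          abs_of_nonneg ha, abs_of_nonneg hb]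

lemma perspective_ineq {p : ℝ} (hp : 1 ≤ p) {x1 x2 y1 y2 a b : ℝ}
    (hx1 : 0 ≤ x1) (hx2 : 0 ≤ x2) (hy1 : 0 < y1) (hy2 : 0 < y2)
    (ha : 0 ≤ a) (hb : 0 ≤ b) (hab : a + b = 1) :
    (a * x1 + b * x2) ^ p / (a * y1 + b * y2) ^ (p - 1)
      ≤ a * (x1 ^ p / y1 ^ (p - 1)) + b * (x2 ^ p / y2 ^ (p - 1)) := by
  have hs : 0 < a * y1 + b * y2 := by
    rcases eq_or_lt_of_le ha with h | h
    · have hb1 : b = 1 := by linarith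
      simp [← h, hb1, hy2]
    · have h1 := mul_pos h hy1
      have h2 := mul_nonneg hb hy2.le
      linarith
  set s := a * y1 + b * y2 with hs'
  have hw1 : (0:ℝ) ≤ a * y1 / s := div_nonneg (mul_nonneg ha hy1.le) hs.le
  have hw2 : (0:ℝ) ≤ b * y2 / s := div_nonneg (mul_nonneg hb hy2.le) hs.le
  have hwsum : a * y1 / s + b * y2 / s = 1 := by
    rw [← add_div, hs', div_self hs.ne']
  have key := (convexOn_rpow hp).2 (Set.mem_Ici.2 (div_nonneg hx1 hy1.le))
    (Set.mem_Ici.2 (div_nonneg hx2 hy2.le)) hw1 hw2 hwsum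
  simp only [smul_eq_mul] at key
  have e0 : a * y1 / s * (x1 / y1) + b * y2 / s * (x2 / y2) = (a * x1 + b * x2) / s := by
    field_simp
  have e1 : a * y1 / s * (x1 / y1) ^ p = a * (x1 ^ p / y1 ^ (p - 1)) / s := by
    rw [Real.div_rpow hx1 hy1.le, Real.rpow_sub_one hy1.ne' p]
    field_simp
  have e2 : b * y2 / s * (x2 / y2) ^ p = b * (x2 ^ p / y2 ^ (p - 1)) / s := by
    rw [Real.div_rpow hx2 hy2.le, Real.rpow_sub_one hy2.ne' p]
    field_simp
  rw [e0, e1, e2, Real.div_rpow (by linarith [mul_nonneg ha hx1, mul_nonneg hb hx2]) hs.le,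
    ← add_div] at key
  calc (a * x1 + b * x2) ^ p / s ^ (p - 1)
      = (a * x1 + b * x2) ^ p / s ^ p * s := by
        rw [Real.rpow_sub_one hs.ne' p]
        field_simp
    _ ≤ (a * (x1 ^ p / y1 ^ (p - 1)) + b * (x2 ^ p / y2 ^ (p - 1))) / s * s :=
        mul_le_mul_of_nonneg_right key hs.le
    _ = a * (x1 ^ p / y1 ^ (p - 1)) + b * (x2 ^ p / y2 ^ (p - 1)) :=
        div_mul_cancel₀ _ hs.ne'

/-- For `r > 3`, the function `(F,d) ↦ ‖F‖^{3(r-1)}/d^{r-1}` is convex on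
matrices times `(0,∞)`; consequently `F ↦ (‖F‖³/det F)^{r-1}` is polyconvex
(a convex function of `(F, det F)`). -/
theorem distortion_polyconvex (r : ℝ) (hr : 3 < r) :
    ConvexOn ℝ {p : Matrix (Fin 3) (Fin 3) ℝ × ℝ | 0 < p.2}
      (fun p => frob p.1 ^ (3 * (r - 1)) / p.2 ^ (r - 1)) ∧
    ∃ h : Matrix (Fin 3) (Fin 3) ℝ × ℝ → ℝ,
      ConvexOn ℝ {p : Matrix (Fin 3) (Fin 3) ℝ × ℝ | 0 < p.2} h ∧
      ∀ F : Matrix (Fin 3) (Fin 3) ℝ, 0 < F.det →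
        (frob F ^ (3 : ℕ) / F.det) ^ (r - 1) = h (F, F.det) := by
  have hrpos : (0:ℝ) < r := by linarith
  set c : ℝ := 3 * (r - 1) / r with hc
  have hc1 : 1 ≤ c := by
    rw [hc, le_div_iff₀ hrpos]
    linarith
  have hcr : c * r = 3 * (r - 1) := by
    rw [hc, div_mul_cancel₀ _ hrpos.ne']
  set K : Matrix (Fin 3) (Fin 3) ℝ → ℝ := fun F => frob F ^ c with hK
  have hKnn : ∀ F, 0 ≤ K F := fun F => Real.rpow_nonneg (frob_nonneg F) c
  have hKconv : ∀ F G : Matrix (Fin 3) (Fin 3) ℝ, ∀ a b : ℝ, 0 ≤ a → 0 ≤ b → a + b = 1 →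
      K (a • F + b • G) ≤ a * K F + b * K G := by
    intro F G a b ha hb hab
    calc frob (a • F + b • G) ^ c ≤ (a * frob F + b * frob G) ^ c :=
          Real.rpow_le_rpow (frob_nonneg _) (frob_combo F G ha hb) (by linarith)
      _ ≤ a * frob F ^ c + b * frob G ^ c := by
          have := (convexOn_rpow hc1).2 (Set.mem_Ici.2 (frob_nonneg F))
            (Set.mem_Ici.2 (frob_nonneg G)) ha hb hab
          simpa using this
  have hKr : ∀ F, (K F) ^ r = frob F ^ (3 * (r - 1)) := by
    intro F
    rw [hK, ← Real.rpow_mul (frob_nonneg F), hcr]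
  have hset : Convex ℝ {p : Matrix (Fin 3) (Fin 3) ℝ × ℝ | 0 < p.2} := by
    rintro ⟨F, d⟩ hp ⟨G, e⟩ hq a b ha hb hab
    simp only [Set.mem_setOf_eq] at hp hq ⊢
    show 0 < a * d + b * e
    rcases eq_or_lt_of_le ha with h | h
    · have hb1 : b = 1 := by linarith
      simp only [← h, hb1]
      simpa using hq
    · have h1 := mul_pos h hp
      have h2 := mul_nonneg hb hq.le
      linarith
  have gconv : ConvexOn ℝ {p : Matrix (Fin 3) (Fin 3) ℝ × ℝ | 0 < p.2}
      (fun p => frob p.1 ^ (3 * (r - 1)) / p.2 ^ (r - 1)) := by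
    refine ⟨hset, ?_⟩
    rintro ⟨F, d⟩ hFd ⟨G, e⟩ hGe a b ha hb hab
    simp only [Set.mem_setOf_eq] at hFd hGe
    have hd : 0 < d := hFd
    have he : 0 < e := hGe
    simp only [Prod.smul_mk, Prod.mk_add_mk, smul_eq_mul]
    have hs : 0 < a * d + b * e := by
      rcases eq_or_lt_of_le ha with h | h
      · have hb1 : b = 1 := by linarith
        simp [← h, hb1, he]
      · have h1 := mul_pos h hd
        have h2 := mul_nonneg hb he.le
        linarith
    calc frob (a • F + b • G) ^ (3 * (r - 1)) / (a * d + b * e) ^ (r - 1)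
        = K (a • F + b • G) ^ r / (a * d + b * e) ^ (r - 1) := by rw [hKr]
      _ ≤ (a * K F + b * K G) ^ r / (a * d + b * e) ^ (r - 1) := by
          gcongr
          · exact hKnn _
          · exact hKconv F G a b ha hb hab
      _ ≤ a * (K F ^ r / d ^ (r - 1)) + b * (K G ^ r / e ^ (r - 1)) :=
          perspective_ineq (by linarith) (hKnn F) (hKnn G) hd he ha hb hab
      _ = a * (frob F ^ (3 * (r - 1)) / d ^ (r - 1)) + b * (frob G ^ (3 * (r - 1)) / e ^ (r - 1)) := by
          rw [hKr, hKr]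
  refine ⟨gconv, fun p => frob p.1 ^ (3 * (r - 1)) / p.2 ^ (r - 1), gconv, ?_⟩
  intro F hF
  rw [Real.div_rpow (pow_nonneg (frob_nonneg F) 3) hF.le]
  congr 1
  rw [← Real.rpow_natCast (frob F) 3, ← Real.rpow_mul (frob_nonneg F)]
  norm_num
end
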